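/- arXiv:2212.07828 — 3 statements merged into one kernel-verified Lean document; each statement's English description precedes it below -/
import Mathlib

section
/- Fix a ∈ ℝ with a ≠ 0 and c > 0, and for each λ ∈ (1,∞) let T_*(λ) = T_*(a,λ,c) be the shock time. If a > 0 then λ ↦ T_*(λ) is strictly decreasing on (1,∞); if a < 0 then λ ↦ T_*(λ) is strictly increasing on (1,∞). (As λ decreases the damping effect becomes stronger, which delays the shock for a > 0 and advances it for a < 0.) -/
open Set Real intervalIntegral MeasureTheory

/-- `B(t) = ∫₀ᵗ A(s)⁻¹ ds = ∫₀ᵗ exp((a/(λ−1))·((1+s)^(1−λ) − 1)) ds`. -/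
noncomputable def dampB (a lam t : ℝ) : ℝ :=
  ∫ s in (0:ℝ)..t, Real.exp (a / (lam - 1) * ((1 + s) ^ (1 - lam) - 1))

/-!
For `s > 0` the exponent `a/(λ-1)·((1+s)^(1-λ) - 1)` equals `a` times the secant slope of the
strictly convex function `μ ↦ (1+s)^(-μ)` between `0` and `μ = λ - 1`, so it is strictly
monotone in `λ`, increasing for `a > 0` and decreasing for `a < 0`. Hence so is `B(t)` for every
fixed `t > 0`, and since `B` is strictly increasing in `t`, the time at which it reaches `1/c`
moves the opposite way.
-/

theorem strictConvexOn_rpow_left {b : ℝ} (hb₀ : 0 < b) (hb₁ : b ≠ 1) :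
    StrictConvexOn ℝ univ fun y : ℝ ↦ b ^ y := by
  refine ⟨convex_univ, fun y _ z _ hyz μ ν hμ hν hμν ↦ ?_⟩
  have hlog : log b ≠ 0 := log_ne_zero_of_pos_of_ne_one hb₀ hb₁
  have hne : log b * y ≠ log b * z := fun h ↦ hyz (mul_left_cancel₀ hlog h)
  have := strictConvexOn_exp.2 (mem_univ _) (mem_univ _) hne hμ hν hμν
  simp only [rpow_def_of_pos hb₀, smul_eq_mul] at this ⊢
  convert this using 2
  ring

theorem rpow_sub_one_div_lt_rpow_sub_one_div {b y z : ℝ} (hb₀ : 0 < b) (hb₁ : b ≠ 1)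
    (hy : y ≠ 0) (hz : z ≠ 0) (hyz : y < z) : (b ^ y - 1) / y < (b ^ z - 1) / z := by
  simpa using (strictConvexOn_rpow_left hb₀ hb₁).secant_strict_mono (mem_univ 0)
    (mem_univ y) (mem_univ z) hy hz hyz

theorem dampB_exponent_eq (a lam : ℝ) {s : ℝ} (hs : 0 ≤ 1 + s) :
    a / (lam - 1) * ((1 + s) ^ (1 - lam) - 1) = a * (((1 + s)⁻¹ ^ (lam - 1) - 1) / (lam - 1)) := by
  rw [inv_rpow hs, ← rpow_neg hs, neg_sub]
  ring

theorem continuousOn_dampB_integrand (a lam : ℝ) :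
    ContinuousOn (fun s ↦ exp (a / (lam - 1) * ((1 + s) ^ (1 - lam) - 1))) (Ioi (-1)) := by
  refine ContinuousOn.rexp (continuousOn_const.mul (ContinuousOn.sub ?_ continuousOn_const))
  exact (continuousOn_const.add continuousOn_id).rpow_const fun s hs ↦
    Or.inl (show 1 + s ≠ 0 by linarith [mem_Ioi.1 hs])

theorem intervalIntegrable_dampB_integrand (a lam : ℝ) {t₁ t₂ : ℝ} (h₁ : -1 < t₁) (h₂ : -1 < t₂) :
    IntervalIntegrable (fun s ↦ exp (a / (lam - 1) * ((1 + s) ^ (1 - lam) - 1))) volume t₁ t₂ :=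
  ((continuousOn_dampB_integrand a lam).mono
    ((convex_Ioi _).ordConnected.uIcc_subset h₁ h₂)).intervalIntegrable

theorem dampB_strictMonoOn (a lam : ℝ) : StrictMonoOn (dampB a lam) (Ioi (-1)) := by
  intro t₁ h₁ t₂ h₂ ht
  have h₀ : (-1 : ℝ) < 0 := by norm_num
  have hdiff := integral_interval_sub_left (intervalIntegrable_dampB_integrand a lam h₀ h₂)
    (intervalIntegrable_dampB_integrand a lam h₀ h₁)
  have hpos := intervalIntegral_pos_of_pos_on (intervalIntegrable_dampB_integrand a lam h₁ h₂)
    (fun _ _ ↦ exp_pos _) ht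
  unfold dampB
  linarith

theorem dampB_lt_dampB {a lam₁ lam₂ t : ℝ} (ht : 0 < t)
    (h : ∀ s ∈ Ioc 0 t, a / (lam₁ - 1) * ((1 + s) ^ (1 - lam₁) - 1) <
      a / (lam₂ - 1) * ((1 + s) ^ (1 - lam₂) - 1)) :
    dampB a lam₁ t < dampB a lam₂ t := by
  have hsub : Icc 0 t ⊆ Ioi (-1) := fun s hs ↦ mem_Ioi.2 (by linarith [hs.1])
  exact integral_lt_integral_of_continuousOn_of_le_of_exists_lt ht
    ((continuousOn_dampB_integrand a lam₁).mono hsub)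
    ((continuousOn_dampB_integrand a lam₂).mono hsub)
    (fun s hs ↦ (exp_lt_exp.2 (h s hs)).le)
    ⟨t, right_mem_Icc.2 ht.le, exp_lt_exp.2 (h t (right_mem_Ioc.2 ht))⟩

theorem dampB_slope_lt {lam₁ lam₂ s : ℝ} (h₁ : 1 < lam₁) (hlam : lam₁ < lam₂) (hs : 0 < s) :
    ((1 + s)⁻¹ ^ (lam₁ - 1) - 1) / (lam₁ - 1) < ((1 + s)⁻¹ ^ (lam₂ - 1) - 1) / (lam₂ - 1) :=
  rpow_sub_one_div_lt_rpow_sub_one_div (by positivity) (inv_ne_one.2 (by linarith))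
    (by linarith) (by linarith) (by linarith)

theorem dampB_strictMonoOn_lam {a t : ℝ} (ha : 0 < a) (ht : 0 < t) :
    StrictMonoOn (fun lam ↦ dampB a lam t) (Ioi 1) := by
  refine fun lam₁ h₁ lam₂ _ hlam ↦ dampB_lt_dampB ht fun s hs ↦ ?_
  rw [dampB_exponent_eq a lam₁ (by linarith [hs.1]), dampB_exponent_eq a lam₂ (by linarith [hs.1])]
  exact mul_lt_mul_of_pos_left (dampB_slope_lt h₁ hlam hs.1) ha

theorem dampB_strictAntiOn_lam {a t : ℝ} (ha : a < 0) (ht : 0 < t) :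
    StrictAntiOn (fun lam ↦ dampB a lam t) (Ioi 1) := by
  refine fun lam₁ h₁ lam₂ _ hlam ↦ dampB_lt_dampB ht fun s hs ↦ ?_
  rw [dampB_exponent_eq a lam₁ (by linarith [hs.1]), dampB_exponent_eq a lam₂ (by linarith [hs.1])]
  exact mul_lt_mul_of_neg_left (dampB_slope_lt h₁ hlam hs.1) ha

theorem stmt5_general (a c : ℝ)
    (lam₁ lam₂ T₁ T₂ : ℝ) (hlam₁ : 1 < lam₁) (hll : lam₁ < lam₂)
    (hT₁ : 0 < T₁) (hB₁ : dampB a lam₁ T₁ = 1 / c)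
    (hT₂ : 0 < T₂) (hB₂ : dampB a lam₂ T₂ = 1 / c) :
    (0 < a → T₂ < T₁) ∧ (a < 0 → T₁ < T₂) := by
  have hlam₂ : lam₂ ∈ Ioi 1 := hlam₁.trans hll
  have hT₁' : T₁ ∈ Ioi (-1) := mem_Ioi.2 (by linarith)
  have hT₂' : T₂ ∈ Ioi (-1) := mem_Ioi.2 (by linarith)
  refine ⟨fun ha ↦ ?_, fun ha ↦ ?_⟩
  · refine (dampB_strictMonoOn a lam₂).lt_iff_lt hT₂' hT₁' |>.1 ?_
    calc dampB a lam₂ T₂ = dampB a lam₁ T₁ := hB₂.trans hB₁.symm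
      _ < dampB a lam₂ T₁ := dampB_strictMonoOn_lam ha hT₁ hlam₁ hlam₂ hll
  · refine (dampB_strictMonoOn a lam₁).lt_iff_lt hT₁' hT₂' |>.1 ?_
    calc dampB a lam₁ T₁ = dampB a lam₂ T₂ := hB₁.trans hB₂.symm
      _ < dampB a lam₁ T₂ := dampB_strictAntiOn_lam ha hT₂ hlam₁ hlam₂ hll

/-- Monotonicity of the shock time `T_*(a,λ,c)` in the decay rate `λ`: for `a > 0` it is
strictly decreasing in `λ`, for `a < 0` it is strictly increasing in `λ`. -/
theorem stmt5 (a c : ℝ) (ha : a ≠ 0) (hc : 0 < c)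
    (lam₁ lam₂ T₁ T₂ : ℝ) (hlam₁ : 1 < lam₁) (hlam₂ : 1 < lam₂) (hll : lam₁ < lam₂)
    (hT₁ : 0 < T₁) (hB₁ : dampB a lam₁ T₁ = 1 / c)
    (hT₂ : 0 < T₂) (hB₂ : dampB a lam₂ T₂ = 1 / c) :
    (0 < a → T₂ < T₁) ∧ (a < 0 → T₁ < T₂) :=
  stmt5_general a c lam₁ lam₂ T₁ T₂ hlam₁ hll hT₁ hB₁ hT₂ hB₂
end

section
/- Let a ∈ ℝ, λ > 1 and c ≥ 0. Then the function w(t) = c / (A(t)·(1 + c·B(t))) is defined for all t ≥ 0, satisfies w(0) = c and the Riccati equation w'(t) = −w(t)² − a·w(t)/(1+t)^λ for all t ≥ 0, and obeys 0 ≤ w(t) ≤ c·exp(|a|/(λ−1)) for all t ≥ 0. In particular, the solution of this Riccati equation with nonnegative initial data exists globally in time. (This corresponds to the absence of shock formation for damped Burgers data with nonnegative slope.) -/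
/-- `A(t) = exp((a/(λ−1))·(1 − (1+t)^(1−λ)))`, i.e. `A(t) = exp(∫₀ᵗ a/(1+s)^λ ds)`. -/
noncomputable def dampA (a lam t : ℝ) : ℝ :=
  Real.exp (a / (lam - 1) * (1 - (1 + t) ^ (1 - lam)))

/-- The slope `w(t) = c/(A(t)·(1 + c·B(t)))` along a characteristic with nonnegative
initial slope `c ≥ 0`. -/
noncomputable def dampWpos (a lam c t : ℝ) : ℝ :=
  c / (dampA a lam t * (1 + c * dampB a lam t))

/-!
Writing `w = c / D` with `D = A · (1 + c B)`, the relations `A' = A · a / (1+t)^λ` and `B' = 1 / A`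
give `D' = (a / (1+t)^λ) · D + c`, which turns into the Riccati equation for `w`. For `c ≥ 0` and
`t ≥ 0` we have `B ≥ 0`, so `D ≥ A > 0`, and `w ≤ c / A ≤ c · exp(|a| / (λ - 1))` because the
exponent of `A` is `a / (λ - 1)` times `1 - (1+t)^(1-λ) ∈ [0, 1]`.
-/

open Real Set

theorem hasDerivAt_riccati_solution {A B : ℝ → ℝ} {p c t : ℝ}
    (hA : HasDerivAt A (A t * p) t) (hB : HasDerivAt B (A t)⁻¹ t)
    (hD : A t * (1 + c * B t) ≠ 0) :
    HasDerivAt (fun s => c / (A s * (1 + c * B s)))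
      (-(c / (A t * (1 + c * B t))) ^ 2 - p * (c / (A t * (1 + c * B t)))) t := by
  have hA0 : A t ≠ 0 := left_ne_zero_of_mul hD
  have hD' : HasDerivAt (fun s => A s * (1 + c * B s)) (p * (A t * (1 + c * B t)) + c) t :=
    (hA.mul ((hB.const_mul c).const_add 1)).congr_deriv (by field_simp)
  exact ((hasDerivAt_const t c).div hD' hD).congr_deriv (by field_simp; ring)

theorem dampA_pos (a lam t : ℝ) : 0 < dampA a lam t :=
  exp_pos _

theorem inv_dampA (a lam t : ℝ) :
    (dampA a lam t)⁻¹ = exp (a / (lam - 1) * ((1 + t) ^ (1 - lam) - 1)) := by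
  rw [dampA, ← exp_neg]
  ring_nf

theorem hasDerivAt_dampA {a lam t : ℝ} (hlam : lam ≠ 1) (ht : -1 < t) :
    HasDerivAt (dampA a lam) (dampA a lam t * (a / (1 + t) ^ lam)) t := by
  have hpos : 0 < 1 + t := by linarith
  have hpow : HasDerivAt (fun s : ℝ => (1 + s) ^ (1 - lam))
      ((1 - lam) * (1 + t) ^ (1 - lam - 1)) t := by
    simpa using ((hasDerivAt_id t).const_add 1).rpow_const (p := 1 - lam) (Or.inl hpos.ne')
  refine (((hasDerivAt_const t 1).sub hpow).const_mul (a / (lam - 1))).exp.congr_deriv ?_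
  rw [sub_sub_cancel_left, rpow_neg hpos.le]
  change dampA a lam t * _ = _
  field_simp [sub_ne_zero.2 hlam]
  ring

theorem dampB_eq_integral_inv_dampA (a lam t : ℝ) :
    dampB a lam t = ∫ s in (0 : ℝ)..t, (dampA a lam s)⁻¹ := by
  simp only [dampB, inv_dampA]

theorem dampB_nonneg (a lam : ℝ) {t : ℝ} (ht : 0 ≤ t) : 0 ≤ dampB a lam t :=
  intervalIntegral.integral_nonneg ht fun _ _ => (exp_pos _).le

theorem hasDerivAt_dampB {a lam t : ℝ} (hlam : lam ≠ 1) (ht : -1 < t) :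
    HasDerivAt (dampB a lam) (dampA a lam t)⁻¹ t := by
  have hcont : ContinuousOn (fun s => (dampA a lam s)⁻¹) (Ioi (-1)) := fun s hs =>
    ((hasDerivAt_dampA hlam hs).continuousAt.inv₀ (dampA_pos a lam s).ne').continuousWithinAt
  have hsub : uIcc 0 t ⊆ Ioi (-1) :=
    (Icc_subset_Ioi_iff min_le_max).2 (lt_min (by norm_num) ht)
  rw [funext (dampB_eq_integral_inv_dampA a lam)]
  exact intervalIntegral.integral_hasDerivAt_right (hcont.mono hsub).intervalIntegrable
    (hcont.stronglyMeasurableAtFilter isOpen_Ioi t ht) (hcont.continuousAt (Ioi_mem_nhds ht))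

theorem dampA_mul_one_add_pos {a lam c t : ℝ} (hc : 0 ≤ c) (ht : 0 ≤ t) :
    0 < dampA a lam t * (1 + c * dampB a lam t) :=
  mul_pos (dampA_pos a lam t) (by nlinarith [dampB_nonneg a lam ht])

theorem inv_dampA_le {a lam t : ℝ} (hlam : 1 < lam) (ht : 0 ≤ t) :
    (dampA a lam t)⁻¹ ≤ exp (|a| / (lam - 1)) := by
  rw [dampA, ← exp_neg, exp_le_exp]
  have h0 : 0 ≤ 1 - (1 + t) ^ (1 - lam) :=
    sub_nonneg.2 (rpow_le_one_of_one_le_of_nonpos (by linarith) (by linarith))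
  have h1 : 1 - (1 + t) ^ (1 - lam) ≤ 1 := sub_le_self _ (rpow_nonneg (by linarith) _)
  calc -(a / (lam - 1) * (1 - (1 + t) ^ (1 - lam)))
      ≤ |a / (lam - 1)| * (1 - (1 + t) ^ (1 - lam)) := by
        rw [← neg_mul]
        exact mul_le_mul_of_nonneg_right (neg_le_abs _) h0
    _ ≤ |a / (lam - 1)| := mul_le_of_le_one_right (abs_nonneg _) h1
    _ = |a| / (lam - 1) := by rw [abs_div, abs_of_pos (sub_pos.2 hlam)]

theorem dampWpos_le_mul_inv_dampA {a lam c t : ℝ} (hc : 0 ≤ c) (ht : 0 ≤ t) :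
    dampWpos a lam c t ≤ c * (dampA a lam t)⁻¹ := by
  rw [dampWpos, ← div_eq_mul_inv]
  exact div_le_div_of_nonneg_left hc (dampA_pos a lam t)
    (le_mul_of_one_le_right (dampA_pos a lam t).le
      (le_add_of_nonneg_right (mul_nonneg hc (dampB_nonneg a lam ht))))

theorem stmt8 (a lam c : ℝ) (hlam : 1 < lam) (hc : 0 ≤ c) :
    (∀ t : ℝ, 0 ≤ t → 0 < dampA a lam t * (1 + c * dampB a lam t)) ∧
    dampWpos a lam c 0 = c ∧
    (∀ t : ℝ, 0 ≤ t →
      HasDerivAt (dampWpos a lam c)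
        (-(dampWpos a lam c t) ^ 2 - a * dampWpos a lam c t / (1 + t) ^ lam) t) ∧
    (∀ t : ℝ, 0 ≤ t →
      0 ≤ dampWpos a lam c t ∧
      dampWpos a lam c t ≤ c * Real.exp (|a| / (lam - 1))) := by
  refine ⟨fun t ht => dampA_mul_one_add_pos hc ht, by simp [dampWpos, dampA, dampB],
    fun t ht => ?_, fun t ht => ⟨div_nonneg hc (dampA_mul_one_add_pos hc ht).le, ?_⟩⟩
  · have ht' : -1 < t := by linarith
    refine (hasDerivAt_riccati_solution (hasDerivAt_dampA hlam.ne' ht')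
      (hasDerivAt_dampB hlam.ne' ht') (dampA_mul_one_add_pos hc ht).ne').congr_deriv ?_
    rw [dampWpos]
    ring
  · exact (dampWpos_le_mul_inv_dampA hc ht).trans
      (mul_le_mul_of_nonneg_left (inv_dampA_le hlam ht) hc)
end

section
/- Let U ⊆ ℝ⁴ be open, let g : U → Matrix (Fin 4) (Fin 4) ℝ be continuously differentiable with g(p) invertible for every p ∈ U, let Ω : U → ℝ be continuously differentiable with Ω(p) > 0 for every p ∈ U, and let f : U → ℝ be twice continuously differentiable. Then at every point of U, □_{Ω·g} f = Ω⁻¹·□_g f + Ω⁻²·Σ_{α,β=0}^{3} (g⁻¹)^{αβ}·(∂_α Ω)·(∂_β f), where Ω·g denotes the pointwise scalar multiple of the matrix g (the conformally rescaled metric). -/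
/-- The partial derivative `∂_α f` in the `α`-th coordinate direction of `ℝ⁴`. -/
noncomputable def pderiv4 (α : Fin 4) (f : (Fin 4 → ℝ) → ℝ) (p : Fin 4 → ℝ) : ℝ :=
  fderiv ℝ f p (Pi.single α 1)

/-- The divergence-form wave operator
`□_g f = |det g|^(−1/2) · Σ_{α,β} ∂_α(|det g|^(1/2) · (g⁻¹)^{αβ} · ∂_β f)`. -/
noncomputable def boxOp (g : (Fin 4 → ℝ) → Matrix (Fin 4) (Fin 4) ℝ)
    (f : (Fin 4 → ℝ) → ℝ) (p : Fin 4 → ℝ) : ℝ :=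
  |(g p).det| ^ (-(1:ℝ)/2) *
    ∑ α : Fin 4, ∑ β : Fin 4,
      pderiv4 α (fun q => |(g q).det| ^ ((1:ℝ)/2) * (g q)⁻¹ α β * pderiv4 β f q) p

lemma rpow_half_sq {x : ℝ} (hx : 0 ≤ x) : (x ^ 2 : ℝ) ^ ((1:ℝ)/2) = x := by
  rw [← Real.rpow_natCast x 2, ← Real.rpow_mul hx]
  norm_num

lemma abs_pow4_mul_rpow_half (c d : ℝ) :
    |c ^ 4 * d| ^ ((1:ℝ)/2) = c ^ 2 * |d| ^ ((1:ℝ)/2) := by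
  rw [abs_mul, abs_pow, Real.mul_rpow (pow_nonneg (abs_nonneg c) 4) (abs_nonneg d)]
  have h4 : |c| ^ 4 = (c ^ 2) ^ 2 := by
    rw [← abs_pow, show c ^ 4 = (c ^ 2) ^ 2 by ring, abs_of_nonneg (sq_nonneg _)]
  rw [h4, rpow_half_sq (sq_nonneg c)]

lemma abs_pow4_mul_rpow_neg_half (c d : ℝ) :
    |c ^ 4 * d| ^ (-(1:ℝ)/2) = (c⁻¹) ^ 2 * |d| ^ (-(1:ℝ)/2) := by
  have h : -(1:ℝ)/2 = -((1:ℝ)/2) := by ring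
  rw [h, Real.rpow_neg (abs_nonneg _), Real.rpow_neg (abs_nonneg _),
    abs_pow4_mul_rpow_half, mul_inv, inv_pow]

lemma smul_matrix_inv (c : ℝ) (A : Matrix (Fin 4) (Fin 4) ℝ) :
    (c • A)⁻¹ = c⁻¹ • A⁻¹ := by
  rw [Matrix.inv_def, Matrix.inv_def, Matrix.adjugate_smul, Matrix.det_smul,
    smul_smul, smul_smul]
  simp only [Fintype.card_fin, Ring.inverse_eq_inv']
  congr 1
  rcases eq_or_ne c 0 with rfl | hc
  · simp
  · rcases eq_or_ne A.det 0 with h0 | h0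
    · simp [h0]
    · field_simp

lemma key_pointwise (c : ℝ) (A : Matrix (Fin 4) (Fin 4) ℝ) (α β : Fin 4) :
    |(c • A).det| ^ ((1:ℝ)/2) * (c • A)⁻¹ α β
      = c * (|A.det| ^ ((1:ℝ)/2) * A⁻¹ α β) := by
  rw [Matrix.det_smul, Fintype.card_fin, smul_matrix_inv, abs_pow4_mul_rpow_half,
    Matrix.smul_apply, smul_eq_mul]
  rcases eq_or_ne c 0 with rfl | hc
  · simp
  · field_simp

lemma diffAt_det {M : (Fin 4 → ℝ) → Matrix (Fin 4) (Fin 4) ℝ} {p : Fin 4 → ℝ}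
    (h : ∀ i j, DifferentiableAt ℝ (fun q => M q i j) p) :
    DifferentiableAt ℝ (fun q => (M q).det) p := by
  simp only [Matrix.det_apply', Fin.prod_univ_four]
  exact DifferentiableAt.fun_sum fun σ _ =>
    ((((h (σ 0) 0).mul (h (σ 1) 1)).mul (h (σ 2) 2)).mul (h (σ 3) 3)).const_mul _

lemma diffAt_adjugate {M : (Fin 4 → ℝ) → Matrix (Fin 4) (Fin 4) ℝ} {p : Fin 4 → ℝ}
    (h : ∀ i j, DifferentiableAt ℝ (fun q => M q i j) p) (α β : Fin 4) :
    DifferentiableAt ℝ (fun q => (M q).adjugate α β) p := by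
  simp only [Matrix.adjugate_apply]
  exact diffAt_det fun i j => by
    simp only [Matrix.updateRow_apply]
    rcases eq_or_ne i β with rfl | hi
    · simp
    · simp only [hi, if_false]
      exact h i j

lemma diffAt_inv {M : (Fin 4 → ℝ) → Matrix (Fin 4) (Fin 4) ℝ} {p : Fin 4 → ℝ}
    (h : ∀ i j, DifferentiableAt ℝ (fun q => M q i j) p)
    (hd : (M p).det ≠ 0) (α β : Fin 4) :
    DifferentiableAt ℝ (fun q => (M q)⁻¹ α β) p := by
  have e : ∀ q, (M q)⁻¹ α β = ((M q).det)⁻¹ * (M q).adjugate α β := fun q => by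
    simp [Matrix.inv_def, Ring.inverse_eq_inv']
  simp only [e]
  exact ((diffAt_det h).inv hd).mul (diffAt_adjugate h α β)

lemma diffAt_abs_rpow {d : (Fin 4 → ℝ) → ℝ} {p : Fin 4 → ℝ}
    (h : DifferentiableAt ℝ d p) (hd : d p ≠ 0) :
    DifferentiableAt ℝ (fun q => |d q| ^ ((1:ℝ)/2)) p :=
  ((Real.differentiableAt_rpow_const_of_ne ((1:ℝ)/2)
    (abs_ne_zero.mpr hd)).comp _ (differentiableAt_abs hd)).comp p h

lemma diffAt_pderiv4 {f : (Fin 4 → ℝ) → ℝ} {p : Fin 4 → ℝ}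
    (h : ContDiffAt ℝ 2 f p) (β : Fin 4) :
    DifferentiableAt ℝ (pderiv4 β f) p := by
  have h1 : ContDiffAt ℝ 1 (fderiv ℝ f) p := h.fderiv_right (m := 1) (by norm_num)
  exact (ContinuousLinearMap.apply ℝ ℝ (Pi.single β 1)).differentiableAt.comp p
    (h1.differentiableAt one_ne_zero)

lemma pderiv4_mul {a b : (Fin 4 → ℝ) → ℝ} {p : Fin 4 → ℝ}
    (ha : DifferentiableAt ℝ a p) (hb : DifferentiableAt ℝ b p) (α : Fin 4) :
    pderiv4 α (fun q => a q * b q) p = pderiv4 α a p * b p + a p * pderiv4 α b p := by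
  unfold pderiv4
  rw [fderiv_fun_mul ha hb]
  simp only [ContinuousLinearMap.add_apply, ContinuousLinearMap.coe_smul',
    Pi.smul_apply, smul_eq_mul]
  ring

/-- Conformal transformation law of the wave operator in 4 dimensions:
`□_{Ω·g} f = Ω⁻¹·□_g f + Ω⁻²·Σ_{α,β} (g⁻¹)^{αβ}·(∂_α Ω)·(∂_β f)`. -/
theorem stmt14 (U : Set (Fin 4 → ℝ)) (hU : IsOpen U)
    (g : (Fin 4 → ℝ) → Matrix (Fin 4) (Fin 4) ℝ)
    (hg : ∀ α β : Fin 4, ContDiffOn ℝ 1 (fun p => g p α β) U)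
    (hginv : ∀ p ∈ U, IsUnit (g p))
    (Ω : (Fin 4 → ℝ) → ℝ) (hΩ : ContDiffOn ℝ 1 Ω U) (hΩpos : ∀ p ∈ U, 0 < Ω p)
    (f : (Fin 4 → ℝ) → ℝ) (hf : ContDiffOn ℝ 2 f U) :
    ∀ p ∈ U,
      boxOp (fun q => Ω q • g q) f p =
        (Ω p)⁻¹ * boxOp g f p +
          ((Ω p)⁻¹) ^ 2 *
            ∑ α : Fin 4, ∑ β : Fin 4, (g p)⁻¹ α β * pderiv4 α Ω p * pderiv4 β f p := by
  intro p hp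
  have hpn : U ∈ nhds p := hU.mem_nhds hp
  have hΩd : DifferentiableAt ℝ Ω p := (hΩ.contDiffAt hpn).differentiableAt one_ne_zero
  have hgd : ∀ i j, DifferentiableAt ℝ (fun q => g q i j) p := fun i j =>
    ((hg i j).contDiffAt hpn).differentiableAt one_ne_zero
  have hdet0 : (g p).det ≠ 0 :=
    ((Matrix.isUnit_iff_isUnit_det _).mp (hginv p hp)).ne_zero
  have hΩ0 : Ω p ≠ 0 := (hΩpos p hp).ne'
  have hdet : DifferentiableAt ℝ (fun q => (g q).det) p := diffAt_det hgd
  have habs : DifferentiableAt ℝ (fun q => |(g q).det| ^ ((1:ℝ)/2)) p :=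
    diffAt_abs_rpow hdet hdet0
  have hfd : ∀ β : Fin 4, DifferentiableAt ℝ (pderiv4 β f) p := fun β =>
    diffAt_pderiv4 (hf.contDiffAt hpn) β
  have hH : ∀ α β : Fin 4, DifferentiableAt ℝ
      (fun q => |(g q).det| ^ ((1:ℝ)/2) * (g q)⁻¹ α β * pderiv4 β f q) p := fun α β =>
    (habs.mul (diffAt_inv hgd hdet0 α β)).mul (hfd β)
  have step : ∀ α β : Fin 4,
      pderiv4 α (fun q => |(Ω q • g q).det| ^ ((1:ℝ)/2) * (Ω q • g q)⁻¹ α β *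
          pderiv4 β f q) p
        = pderiv4 α Ω p * (|(g p).det| ^ ((1:ℝ)/2) * (g p)⁻¹ α β * pderiv4 β f p)
          + Ω p * pderiv4 α
              (fun q => |(g q).det| ^ ((1:ℝ)/2) * (g q)⁻¹ α β * pderiv4 β f q) p := by
    intro α β
    have hfun : (fun q => |(Ω q • g q).det| ^ ((1:ℝ)/2) * (Ω q • g q)⁻¹ α β *
          pderiv4 β f q)
        = fun q => Ω q * (|(g q).det| ^ ((1:ℝ)/2) * (g q)⁻¹ α β * pderiv4 β f q) := by
      funext q
      rw [key_pointwise]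
      ring
    rw [hfun, pderiv4_mul hΩd (hH α β)]
  have hpre : |(Ω p • g p).det| ^ (-(1:ℝ)/2)
      = ((Ω p)⁻¹) ^ 2 * |(g p).det| ^ (-(1:ℝ)/2) := by
    rw [Matrix.det_smul, Fintype.card_fin, abs_pow4_mul_rpow_neg_half]
  have hED : |(g p).det| ^ (-(1:ℝ)/2) * |(g p).det| ^ ((1:ℝ)/2) = 1 := by
    rw [← Real.rpow_add (abs_pos.mpr hdet0)]
    norm_num
  simp only [boxOp]
  rw [hpre]
  simp only [step, Finset.sum_add_distrib, ← Finset.mul_sum]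
  have hSA : (∑ α : Fin 4,
        pderiv4 α Ω p * ∑ β : Fin 4, |(g p).det| ^ ((1:ℝ)/2) * (g p)⁻¹ α β * pderiv4 β f p)
      = |(g p).det| ^ ((1:ℝ)/2) *
          ∑ α : Fin 4, ∑ β : Fin 4, (g p)⁻¹ α β * pderiv4 α Ω p * pderiv4 β f p := by
    rw [Finset.mul_sum]
    refine Finset.sum_congr rfl fun α _ => ?_
    rw [Finset.mul_sum, Finset.mul_sum]
    refine Finset.sum_congr rfl fun β _ => ?_
    ring
  rw [hSA]
  have hΩinv : ((Ω p)⁻¹) ^ 2 * Ω p = (Ω p)⁻¹ := by field_simp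
  set D := |(g p).det| ^ (-(1:ℝ)/2) with hD
  set E := |(g p).det| ^ ((1:ℝ)/2) with hE
  set T := ∑ α : Fin 4, ∑ β : Fin 4, (g p)⁻¹ α β * pderiv4 α Ω p * pderiv4 β f p with hT
  set SB := ∑ α : Fin 4, ∑ β : Fin 4,
      pderiv4 α (fun q => |(g q).det| ^ ((1:ℝ)/2) * (g q)⁻¹ α β * pderiv4 β f q) p with hSB
  linear_combination ((Ω p)⁻¹) ^ 2 * T * hED + D * SB * hΩinv
end
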